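/- For ρ ∈ (0,1), N > 0, T > 0, the function K⁽¹⁾(N,T) = N^{−1 − (1/2)sqrt(1 + 4ρT²/N²)} · K(N/T), for any differentiable function K : (0,∞) → ℝ, satisfies the transport PDE K⁽¹⁾_T = (ρ e^{Θ_N} − e^{−Θ_N}) K⁽¹⁾_N + ((ρ/2)Θ_{NN} e^{Θ_N} + (1/2)Θ_{NN} e^{−Θ_N} − (1/N) e^{−Θ_N}) K⁽¹⁾, where Θ(N,T) = T(−1−ρ+sqrt(N²/T²+4ρ)) + N log[(1/(2ρ))(−N/T + sqrt(N²/T²+4ρ))], if and only if K is arbitrary — i.e., for every differentiable K, K⁽¹⁾ of this form solves the PDE. -/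

import Mathlib

/-!
Write `x = N / T` and `r = √(x² + 4ρ)`. The phase is homogeneous of degree one,
`Θ N T = T θ(x)`, with `θ'(x) = log p(x)` for `p(x) = (r - x) / (2ρ)`, so `e^{Θ_N} = p(x)`,
`1 / p(x) = (x + r) / 2` and `Θ_NN = -1 / (T r)`. Hence `ρ e^{Θ_N} - e^{-Θ_N} = -x`: the rays are
`N / T = const` and the transport operator `∂_T + x ∂_N` is the Euler operator `(T ∂_T + N ∂_N) / T`.
On `N ^ a(x) K(x)` the Euler operator acts as multiplication by `a(x)`, and for
`a(x) = -1 - ½ √(1 + 4ρ / x²) = -1 - r / (2x)` this matches the zeroth-order coefficient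
`-1 / (2T) - (x + r) / (2N)` of the equation.
-/

open Real

theorem HasDerivAt.comp_div_const {f : ℝ → ℝ} {f' x : ℝ} (c : ℝ) (hf : HasDerivAt f f' (x / c)) :
    HasDerivAt (fun y => f (y / c)) (f' / c) x :=
  (hf.comp x ((hasDerivAt_id' x).div_const c)).congr_deriv (by ring)

theorem hasDerivAt_const_div {c x : ℝ} (hx : x ≠ 0) :
    HasDerivAt (fun y => c / y) (-(c / x ^ 2)) x := by
  simpa [div_eq_mul_inv] using (hasDerivAt_inv hx).const_mul c

theorem euler_rpow_mul {a h : ℝ → ℝ} {N T : ℝ} (ha : DifferentiableAt ℝ a (N / T))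
    (hh : DifferentiableAt ℝ h (N / T)) (hN : 0 < N) (hT : T ≠ 0) :
    T * deriv (fun t => N ^ a (N / t) * h (N / t)) T
      + N * deriv (fun n => n ^ a (n / T) * h (n / T)) N
      = a (N / T) * (N ^ a (N / T) * h (N / T)) := by
  have hinner := hasDerivAt_const_div (c := N) hT
  have hdT : HasDerivAt (fun t => N ^ a (N / t) * h (N / t)) _ T :=
    ((ha.hasDerivAt.comp T hinner).const_rpow hN).mul (hh.hasDerivAt.comp T hinner)
  have hdN : HasDerivAt (fun n => n ^ a (n / T) * h (n / T)) _ N :=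
    ((hasDerivAt_id' N).rpow (ha.hasDerivAt.comp_div_const T) hN).mul
      (hh.hasDerivAt.comp_div_const T)
  rw [hdT.deriv, hdN.deriv, Function.comp_apply, rpow_sub_one hN.ne']
  field_simp
  ring

noncomputable section

def expThetaN (ρ x : ℝ) : ℝ := 1 / (2 * ρ) * (-x + √(x ^ 2 + 4 * ρ))

def thetaProfile (ρ x : ℝ) : ℝ := -1 - ρ + √(x ^ 2 + 4 * ρ) + x * log (expThetaN ρ x)

def transportExponent (ρ x : ℝ) : ℝ := -1 - 1 / 2 * √(1 + 4 * ρ / x ^ 2)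

end

section

variable {ρ : ℝ}

theorem lt_sqrt_sq_add (hρ : 0 < ρ) (x : ℝ) : x < √(x ^ 2 + 4 * ρ) :=
  lt_sqrt_of_sq_lt (by linarith)

theorem hasDerivAt_sqrt_sq_add (hρ : 0 < ρ) (x : ℝ) :
    HasDerivAt (fun y => √(y ^ 2 + 4 * ρ)) (x / √(x ^ 2 + 4 * ρ)) x := by
  refine (((hasDerivAt_pow 2 x).add_const (4 * ρ)).sqrt (by positivity)).congr_deriv ?_
  field_simp
  ring

theorem expThetaN_pos (hρ : 0 < ρ) (x : ℝ) : 0 < expThetaN ρ x := by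
  have := lt_sqrt_sq_add hρ x
  unfold expThetaN
  exact mul_pos (by positivity) (by linarith)

theorem inv_expThetaN (hρ : 0 < ρ) (x : ℝ) :
    (expThetaN ρ x)⁻¹ = (x + √(x ^ 2 + 4 * ρ)) / 2 := by
  have hsq := sq_sqrt (by positivity : 0 ≤ x ^ 2 + 4 * ρ)
  rw [inv_eq_iff_eq_inv, eq_comm, inv_eq_of_mul_eq_one_right]
  unfold expThetaN
  field_simp
  linear_combination hsq

theorem hasDerivAt_expThetaN (hρ : 0 < ρ) (x : ℝ) :
    HasDerivAt (expThetaN ρ) (-expThetaN ρ x / √(x ^ 2 + 4 * ρ)) x := by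
  have hs := hasDerivAt_sqrt_sq_add hρ x
  refine ((((hasDerivAt_id' x).neg).add hs).const_mul (1 / (2 * ρ))).congr_deriv ?_
  unfold expThetaN
  field_simp
  ring

theorem hasDerivAt_log_expThetaN (hρ : 0 < ρ) (x : ℝ) :
    HasDerivAt (fun y => log (expThetaN ρ y)) (-1 / √(x ^ 2 + 4 * ρ)) x := by
  refine ((hasDerivAt_expThetaN hρ x).log (expThetaN_pos hρ x).ne').congr_deriv ?_
  have := (expThetaN_pos hρ x).ne'
  field_simp

theorem hasDerivAt_thetaProfile (hρ : 0 < ρ) (x : ℝ) :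
    HasDerivAt (thetaProfile ρ) (log (expThetaN ρ x)) x := by
  have hs := hasDerivAt_sqrt_sq_add hρ x
  refine ((hs.const_add (-1 - ρ)).add
    ((hasDerivAt_id' x).mul (hasDerivAt_log_expThetaN hρ x))).congr_deriv ?_
  field_simp
  ring

theorem transportExponent_eq {x : ℝ} (hx : 0 < x) :
    transportExponent ρ x = -1 - √(x ^ 2 + 4 * ρ) / (2 * x) := by
  rw [transportExponent, show 1 + 4 * ρ / x ^ 2 = (x ^ 2 + 4 * ρ) / x ^ 2 by field_simp,
    sqrt_div' _ (sq_nonneg x), sqrt_sq hx.le]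
  ring

theorem differentiableAt_transportExponent (hρ : 0 < ρ) {x : ℝ} (hx : x ≠ 0) :
    DifferentiableAt ℝ (transportExponent ρ) x := by
  unfold transportExponent
  fun_prop (disch := positivity)

end

theorem K1_transport_pde_general (ρ : ℝ) (hρ : 0 < ρ)
    (Θ : ℝ → ℝ → ℝ)
    (hΘ : ∀ N T : ℝ, Θ N T =
      T * (-1 - ρ + Real.sqrt (N^2 / T^2 + 4*ρ))
        + N * Real.log ((1 / (2*ρ)) * (-(N / T) + Real.sqrt (N^2 / T^2 + 4*ρ)))) :
    ∀ K : ℝ → ℝ, Differentiable ℝ K →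
      ∀ K1 : ℝ → ℝ → ℝ,
        (∀ N T : ℝ, K1 N T =
          N ^ (-1 - (1/2) * Real.sqrt (1 + 4*ρ*T^2 / N^2)) * K (N / T)) →
        ∀ N T : ℝ, 0 < N → 0 < T →
          deriv (fun T' => K1 N T') T
            = (ρ * Real.exp (deriv (fun N' => Θ N' T) N)
                - Real.exp (-(deriv (fun N' => Θ N' T) N)))
                * deriv (fun N' => K1 N' T) N
              + ((ρ / 2) * deriv (fun N' => deriv (fun N'' => Θ N'' T) N') N
                    * Real.exp (deriv (fun N' => Θ N' T) N)
                  + (1 / 2) * deriv (fun N' => deriv (fun N'' => Θ N'' T) N') N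
                    * Real.exp (-(deriv (fun N' => Θ N' T) N))
                  - (1 / N) * Real.exp (-(deriv (fun N' => Θ N' T) N)))
                * K1 N T := by
  intro K hK K1 hK1 N T hN hT
  have hx : 0 < N / T := div_pos hN hT
  obtain rfl : K1 = fun n t => n ^ transportExponent ρ (n / t) * K (n / t) := by
    ext n t
    rw [hK1, transportExponent, div_pow, div_div_eq_mul_div]
  have hΘT : (fun n => Θ n T) = fun n => T * thetaProfile ρ (n / T) := by
    ext n
    rw [hΘ, thetaProfile, expThetaN, div_pow]
    field_simp
  have hΘN : deriv (fun n => Θ n T) = fun n => log (expThetaN ρ (n / T)) := by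
    ext n
    rw [hΘT, (((hasDerivAt_thetaProfile hρ _).comp_div_const T).const_mul T).deriv]
    field_simp
  have hΘNN : deriv (fun n => log (expThetaN ρ (n / T))) N = -1 / √((N / T) ^ 2 + 4 * ρ) / T :=
    ((hasDerivAt_log_expThetaN hρ _).comp_div_const T).deriv
  have hEuler := euler_rpow_mul (differentiableAt_transportExponent hρ hx.ne') (hK (N / T)) hN
    hT.ne'
  simp only [hΘN, hΘNN, exp_neg, exp_log (expThetaN_pos hρ _), inv_expThetaN hρ]
  set F := N ^ transportExponent ρ (N / T) * K (N / T)
  rw [transportExponent_eq hx] at hEuler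
  unfold expThetaN
  linear_combination (norm := skip) hEuler / T
  field_simp
  ring

theorem K1_transport_pde (ρ : ℝ) (hρ : 0 < ρ) (hρ1 : ρ < 1)
    (Θ : ℝ → ℝ → ℝ)
    (hΘ : ∀ N T : ℝ, Θ N T =
      T * (-1 - ρ + Real.sqrt (N^2 / T^2 + 4*ρ))
        + N * Real.log ((1 / (2*ρ)) * (-(N / T) + Real.sqrt (N^2 / T^2 + 4*ρ)))) :
    ∀ K : ℝ → ℝ, Differentiable ℝ K →
      ∀ K1 : ℝ → ℝ → ℝ,
        (∀ N T : ℝ, K1 N T =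
          N ^ (-1 - (1/2) * Real.sqrt (1 + 4*ρ*T^2 / N^2)) * K (N / T)) →
        ∀ N T : ℝ, 0 < N → 0 < T →
          deriv (fun T' => K1 N T') T
            = (ρ * Real.exp (deriv (fun N' => Θ N' T) N)
                - Real.exp (-(deriv (fun N' => Θ N' T) N)))
                * deriv (fun N' => K1 N' T) N
              + ((ρ / 2) * deriv (fun N' => deriv (fun N'' => Θ N'' T) N') N
                    * Real.exp (deriv (fun N' => Θ N' T) N)
                  + (1 / 2) * deriv (fun N' => deriv (fun N'' => Θ N'' T) N') N
                    * Real.exp (-(deriv (fun N' => Θ N' T) N))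
                  - (1 / N) * Real.exp (-(deriv (fun N' => Θ N' T) N)))
                * K1 N T :=
  K1_transport_pde_general ρ hρ Θ hΘ
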